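/- On the open set U = { x ∈ ℝ⁴ : x₃ > 0 } (coordinates x⁰,x¹,x²,x³) define the symmetric matrix-valued function g with nonzero components g₀₀ = 1/x³, g₀₁ = g₁₀ = x²/x³, g₁₁ = x³ + (x²)²/x³, g₂₂ = x³, g₃₃ = x³ (all other components zero), and the vector field D with components D⁰ = 2x⁰, D¹ = x¹, D² = x², D³ = x³. Then for all a, b ∈ {0,1,2,3} and all points of U: Σ_c D^c·∂_c g_{ab} + Σ_c g_{cb}·∂_a D^c + Σ_c g_{ac}·∂_b D^c = 3·g_{ab}. -/

import Mathlib

/-!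
Give `x⁰` weight 2 and `x¹, x², x³` weight 1. Then `D = Σ wᵢ xⁱ ∂ᵢ` is the weighted Euler field,
so `∂_a D^c = w_a δ_a^c`, and the weighted dilations `(x⁰, x¹, x², x³) ↦ (t²x⁰, t x¹, t x², t x³)`
scale `g_{ab}` by `t ^ (3 - w_a - w_b)`. Euler's identity for weighted homogeneous functions turns
`Σ D^c ∂_c g_{ab}` into `(3 - w_a - w_b) g_{ab}`, and the two remaining terms add `(w_a + w_b) g_{ab}`.
-/

/-- Partial derivative in the `a`-th coordinate direction on Euclidean ℝ⁴. -/
noncomputable def pdR (a : Fin 4) (f : EuclideanSpace ℝ (Fin 4) → ℝ)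
    (x : EuclideanSpace ℝ (Fin 4)) : ℝ :=
  fderiv ℝ f x (EuclideanSpace.single a 1)

/-- The component matrix of the Gibbons–Hawking metric with potential `V = x³`:
`g₀₀ = 1/x³`, `g₀₁ = g₁₀ = x²/x³`, `g₁₁ = x³ + (x²)²/x³`, `g₂₂ = g₃₃ = x³`. -/
noncomputable def gGH (x : EuclideanSpace ℝ (Fin 4)) : Fin 4 → Fin 4 → ℝ :=
  !![1 / x 3,       x 2 / x 3,                 0,   0;
     x 2 / x 3,     x 3 + (x 2) ^ 2 / x 3,     0,   0;
     0,             0,                         x 3, 0;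
     0,             0,                         0,   x 3]

/-- The components of the homothetic vector field `D = 2x⁰∂₀ + x¹∂₁ + x²∂₂ + x³∂₃`. -/
noncomputable def Dvec : Fin 4 → EuclideanSpace ℝ (Fin 4) → ℝ :=
  ![fun x => 2 * x 0, fun x => x 1, fun x => x 2, fun x => x 3]

open Finset

section WeightedHomogeneity

variable {ι : Type*} (w : ι → ℕ)

def weightedDilation (t : ℝ) (x : EuclideanSpace ℝ ι) : EuclideanSpace ℝ ι :=
  WithLp.toLp 2 fun i => t ^ w i * x i

def weightedEuler (x : EuclideanSpace ℝ ι) : EuclideanSpace ℝ ι :=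
  WithLp.toLp 2 fun i => (w i : ℝ) * x i

lemma weightedDilation_one (x : EuclideanSpace ℝ ι) : weightedDilation w 1 x = x := by
  simp [weightedDilation]

variable [Fintype ι]

lemma hasDerivAt_weightedDilation (x : EuclideanSpace ℝ ι) :
    HasDerivAt (weightedDilation w · x) (weightedEuler w x) 1 := by
  have h := (PiLp.hasFDerivAt_toLp (𝕜 := ℝ) 2 (fun i => (1 : ℝ) ^ w i * x i)).comp_hasDerivAt 1
    (hasDerivAt_pi.2 fun i => (hasDerivAt_pow (w i) (1 : ℝ)).mul_const (x i))
  simpa [weightedDilation, weightedEuler, Function.comp_def] using h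

lemma weightedEuler_eq_sum [DecidableEq ι] (x : EuclideanSpace ℝ ι) :
    weightedEuler w x = ∑ i, ((w i : ℝ) * x i) • EuclideanSpace.single i 1 := by
  ext j
  simp [weightedEuler, Pi.single_apply]

theorem fderiv_apply_weightedEuler_of_homogeneous {f : EuclideanSpace ℝ ι → ℝ}
    {x : EuclideanSpace ℝ ι} {k : ℤ} (hf : DifferentiableAt ℝ f x)
    (hom : ∀ t : ℝ, 0 < t → f (weightedDilation w t x) = t ^ k * f x) :
    fderiv ℝ f x (weightedEuler w x) = k * f x := by
  have along_curve : HasDerivAt (fun t => f (weightedDilation w t x))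
      (fderiv ℝ f x (weightedEuler w x)) 1 :=
    hf.hasFDerivAt.comp_hasDerivAt_of_eq 1 (hasDerivAt_weightedDilation w x)
      (weightedDilation_one w x).symm
  have power : HasDerivAt (fun t : ℝ => t ^ k * f x) (k * f x) 1 := by
    simpa using (hasDerivAt_zpow k 1 (Or.inl one_ne_zero)).mul_const (f x)
  refine along_curve.unique (power.congr_of_eventuallyEq ?_)
  filter_upwards [lt_mem_nhds one_pos] with t ht using hom t ht

lemma fderiv_const_mul_apply_single [DecidableEq ι] (c : ℝ) (j i : ι) (x : EuclideanSpace ℝ ι) :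
    fderiv ℝ (fun y : EuclideanSpace ℝ ι => c * y j) x (EuclideanSpace.single i 1)
      = if i = j then c else 0 := by
  rw [((PiLp.hasFDerivAt_apply 2 x j).const_mul c).fderiv]
  simp [eq_comm]

theorem lieDerivative_weightedEuler_of_homogeneous [DecidableEq ι]
    {g : EuclideanSpace ℝ ι → ι → ι → ℝ} {x : EuclideanSpace ℝ ι} {k : ℤ} {a b : ι}
    (hg : DifferentiableAt ℝ (fun y => g y a b) x)
    (hom : ∀ t : ℝ, 0 < t → g (weightedDilation w t x) a b = t ^ (k - w a - w b) * g x a b) :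
    (∑ c, (w c * x c) * fderiv ℝ (fun y => g y a b) x (EuclideanSpace.single c 1))
      + (∑ c, g x c b * fderiv ℝ (fun y => (w c : ℝ) * y c) x (EuclideanSpace.single a 1))
      + (∑ c, g x a c * fderiv ℝ (fun y => (w c : ℝ) * y c) x (EuclideanSpace.single b 1))
      = k * g x a b := by
  have euler := fderiv_apply_weightedEuler_of_homogeneous w hg hom
  simp only [weightedEuler_eq_sum, map_sum, map_smul, smul_eq_mul] at euler
  simp only [fderiv_const_mul_apply_single, mul_ite, mul_zero, sum_ite_eq, mem_univ, if_true, euler]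
  push_cast
  ring

end WeightedHomogeneity

def ghWeight : Fin 4 → ℕ := ![2, 1, 1, 1]

lemma Dvec_eq (c : Fin 4) : Dvec c = fun y => (ghWeight c : ℝ) * y c := by
  fin_cases c <;> simp [Dvec, ghWeight]

lemma differentiableAt_gGH {x : EuclideanSpace ℝ (Fin 4)} (hx : x 3 ≠ 0) (a b : Fin 4) :
    DifferentiableAt ℝ (fun y => gGH y a b) x := by
  fin_cases a <;> fin_cases b <;>
    simp only [gGH, Fin.zero_eta, Fin.mk_one, Fin.reduceFinMk,
      Matrix.of_apply, Matrix.cons_val', Matrix.cons_val, Matrix.cons_val_zero, Matrix.cons_val_one,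
      Matrix.cons_val_fin_one] <;>
    fun_prop (disch := assumption)

lemma gGH_weightedDilation {t : ℝ} (ht : t ≠ 0) (x : EuclideanSpace ℝ (Fin 4)) (a b : Fin 4) :
    gGH (weightedDilation ghWeight t x) a b = t ^ (3 - ghWeight a - ghWeight b : ℤ) * gGH x a b := by
  fin_cases a <;> fin_cases b <;> simp [gGH, weightedDilation, ghWeight] <;> field_simp

/-- `D` is a homothety of the Gibbons–Hawking domain-wall metric:
`ℒ_D g = 3g`, i.e. `D^c ∂_c g_{ab} + g_{cb}∂_a D^c + g_{ac}∂_b D^c = 3 g_{ab}` on `x₃ > 0`. -/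
theorem homothety_of_gibbons_hawking_metric :
    ∀ x : EuclideanSpace ℝ (Fin 4), x 3 > 0 → ∀ a b : Fin 4,
      (∑ c : Fin 4, Dvec c x * pdR c (fun y => gGH y a b) x)
        + (∑ c : Fin 4, gGH x c b * pdR a (fun y => Dvec c y) x)
        + (∑ c : Fin 4, gGH x a c * pdR b (fun y => Dvec c y) x)
      = 3 * gGH x a b := by
  intro x hx a b
  simp only [pdR, Dvec_eq]
  exact_mod_cast lieDerivative_weightedEuler_of_homogeneous ghWeight (k := 3)
    (differentiableAt_gGH hx.ne' a b) fun t ht => gGH_weightedDilation ht.ne' x a b
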